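/- Let τ be a Hausdorff locally solid topology on a vector lattice X. The following are equivalent: (i) uτ is locally bounded; (ii) uτ has an order bounded neighbourhood of zero; (iii) τ has an order bounded neighbourhood of zero. Moreover, in this case τ = uτ. -/

import Mathlib

open Filter Set Topology

variable {X : Type*} [Lattice X] [AddCommGroup X] [Module ℝ X]
  [CovariantClass X X (· + ·) (· ≤ ·)] [PosSMulMono ℝ X]

/-- The Archimedean property for a lattice-ordered group. -/
def VLArchimedean (X : Type*) [Lattice X] [AddCommGroup X] : Prop :=
  ∀ x y : X, 0 ≤ x → (∀ n : ℕ, n • x ≤ y) → x = 0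

/-- A set is solid if `x ∈ S` and `|y| ≤ |x|` imply `y ∈ S`. -/
def IsSolid (S : Set X) : Prop := ∀ ⦃x y : X⦄, x ∈ S → |y| ≤ |x| → y ∈ S

/-- A locally solid (linear) topology on a vector lattice. -/
def IsLocallySolidTop (τ : TopologicalSpace X) : Prop :=
  @IsTopologicalAddGroup X τ _ ∧ @ContinuousSMul ℝ X _ _ τ ∧
    ∀ U ∈ @nhds X τ 0, ∃ V ∈ @nhds X τ 0, IsSolid V ∧ V ⊆ U

/-- An order ideal: a solid linear subspace. -/
def IsOrderIdeal (A : Set X) : Prop :=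
  0 ∈ A ∧ (∀ x ∈ A, ∀ y ∈ A, x + y ∈ A) ∧ (∀ (c : ℝ), ∀ x ∈ A, c • x ∈ A) ∧ IsSolid A

/-- The order ideal generated by a set. -/
def idealGenerated (A : Set X) : Set X := ⋂₀ {I | IsOrderIdeal I ∧ A ⊆ I}

/-- A band: an order ideal closed under existing suprema. -/
def IsBand (B : Set X) : Prop :=
  IsOrderIdeal B ∧ ∀ D ⊆ B, ∀ x : X, IsLUB D x → x ∈ B

/-- The band generated by a set. -/
def bandGenerated (A : Set X) : Set X := ⋂₀ {B | IsBand B ∧ A ⊆ B}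

/-- `A` is a countable order basis: `A` is at most countable and generates `X` as a band. -/
def CountableOrderBasis (A : Set X) : Prop := A.Countable ∧ bandGenerated A = Set.univ

/-- The neighbourhood filter of zero of the unbounded topology `u_A τ`:
generated by the sets `{x : |x| ⊓ a ∈ U}` for `U` a `τ`-neighbourhood of zero, `a ∈ A₊`. -/
def unbNhdsZero (τ : TopologicalSpace X) (A : Set X) : Filter X :=
  ⨅ a ∈ {a ∈ A | 0 ≤ a}, Filter.comap (fun x => |x| ⊓ a) (@nhds X τ 0)

/-- The unbounded topology `u_A τ` induced by the ideal `A`; `u τ = unbTopology τ Set.univ`. -/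
def unbTopology (τ : TopologicalSpace X) (A : Set X) : TopologicalSpace X :=
  TopologicalSpace.mkOfNhds fun x => Filter.map (x + ·) (unbNhdsZero τ A)

/-- A sublattice/ideal is order dense if every nonzero positive vector dominates a
nonzero positive vector of it. -/
def OrderDense (A : Set X) : Prop := ∀ x : X, 0 < x → ∃ y ∈ A, 0 < y ∧ y ≤ x

/-- A minimal topology: a Hausdorff locally solid topology with no strictly coarser
Hausdorff locally solid topology. (In Mathlib's order on `TopologicalSpace`,
`τ ≤ σ` means `τ` is finer than `σ`.) -/
def IsMinimalTop (τ : TopologicalSpace X) : Prop :=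
  IsLocallySolidTop τ ∧ @T2Space X τ ∧
    ∀ σ : TopologicalSpace X, IsLocallySolidTop σ → @T2Space X σ → τ ≤ σ → σ = τ

/-- The countable sup property. -/
def CountableSupProperty (Y : Type*) [Lattice Y] : Prop :=
  ∀ S : Set Y, ∀ x : Y, S.Nonempty → IsLUB S x → ∃ C ⊆ S, C.Countable ∧ IsLUB C x

/-- Order convergence to zero of a net: there is a downward directed set `D` with
infimum `0`, each member of which eventually dominates `|x α|`. -/
def OrderNull {ι : Type*} [Preorder ι] (x : ι → X) : Prop :=
  ∃ D : Set X, D.Nonempty ∧ (∀ a ∈ D, ∀ b ∈ D, ∃ c ∈ D, c ≤ a ∧ c ≤ b) ∧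
    IsGLB D 0 ∧ ∀ d ∈ D, ∃ α₀ : ι, ∀ α, α₀ ≤ α → |x α| ≤ d

/-- Unbounded order (uo-) convergence to zero of a net. -/
def UoNull {ι : Type*} [Preorder ι] (x : ι → X) : Prop :=
  ∀ u : X, 0 ≤ u → OrderNull (fun α => |x α| ⊓ u)

/-- A set is topologically bounded if it is absorbed by every neighbourhood of zero. -/
def TopBounded (τ : TopologicalSpace X) (S : Set X) : Prop :=
  ∀ U ∈ @nhds X τ 0, ∃ l : ℝ, 0 < l ∧ ∀ x ∈ S, l • x ∈ U

/-- A locally bounded topology: it has a topologically bounded neighbourhood of zero. -/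
def LocallyBoundedTop (τ : TopologicalSpace X) : Prop :=
  ∃ V ∈ @nhds X τ 0, TopBounded τ V

/-- A submetrizable topology: finer than some metrizable linear topology.
(In Mathlib's order on `TopologicalSpace`, `τ ≤ σ` means `τ` is finer than `σ`.) -/
def Submetrizable (τ : TopologicalSpace X) : Prop :=
  ∃ σ : TopologicalSpace X, @IsTopologicalAddGroup X σ _ ∧ @ContinuousSMul ℝ X _ _ σ ∧
    @TopologicalSpace.MetrizableSpace X σ ∧ τ ≤ σ

/-- A Riesz submetrizable topology: finer than some metrizable locally solid topology. -/
def RieszSubmetrizable (τ : TopologicalSpace X) : Prop :=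
  ∃ σ : TopologicalSpace X, IsLocallySolidTop σ ∧ @TopologicalSpace.MetrizableSpace X σ ∧ τ ≤ σ

/-- Dedekind (order) completeness. -/
def DedekindComplete (Y : Type*) [Lattice Y] : Prop :=
  ∀ S : Set Y, S.Nonempty → BddAbove S → ∃ x, IsLUB S x

/-- Lateral completeness: every nonempty set of pairwise disjoint positive vectors
has a supremum. -/
def LaterallyComplete (Y : Type*) [Lattice Y] [AddCommGroup Y] : Prop :=
  ∀ S : Set Y, S.Nonempty → (∀ x ∈ S, 0 ≤ x) → (S.Pairwise fun a b => a ⊓ b = 0) →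
    ∃ x, IsLUB S x


/-!
Every `uτ`-neighbourhood of zero contains a basic set `{x | |x| ⊓ a ∈ U}` with `U` a solid
`τ`-neighbourhood of zero. If such a set is bounded, it lies in `[-a, a]`: for `x` in it the
whole ray spanned by `(|x| - a)⁺` stays in the set, since `M • (|x| - a)⁺ ⊓ a ≤ |x| ⊓ a`, and a
bounded ray in a Hausdorff topology is zero. Conversely, if `τ` has a neighbourhood of zero
inside `[-u, u]`, then `u` is a strong unit, and for a strong unit `|x| ⊓ u ≤ u / 2` forces
`|x| ≤ u / 2`; hence the basic sets with `a = u` are already `τ`-neighbourhoods of zero and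
`uτ = τ`. Order intervals are `τ`-bounded, which closes the cycle.
-/

instance IsOrderedAddMonoid.of_addLeftMono (α : Type*) [Lattice α] [AddCommGroup α]
    [AddLeftMono α] : IsOrderedAddMonoid α where
  add_le_add_left _ _ h c := add_le_add_left h c

section LatticeOrderedGroup

variable {α : Type*} [Lattice α] [AddCommGroup α] [AddLeftMono α]

theorem inf_add_le_inf_add_inf {a b c : α} (ha : 0 ≤ a) (hb : 0 ≤ b) (hc : 0 ≤ c) :
    a ⊓ (b + c) ≤ a ⊓ b + a ⊓ c := by
  have h₁ : a ⊓ (b + c) - a ⊓ b ≤ c := by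
    rw [sub_le_iff_le_add', inf_add]
    exact inf_le_inf_right _ (le_add_of_nonneg_right hc)
  have h₂ : a ⊓ (b + c) - a ⊓ b ≤ a := (sub_le_self _ (le_inf ha hb)).trans inf_le_left
  exact sub_le_iff_le_add'.1 (le_inf h₂ h₁)

theorem abs_le_iff_mem_Icc {x a : α} : |x| ≤ a ↔ x ∈ Set.Icc (-a) a := by
  rw [abs_le', neg_le, and_comm, Set.mem_Icc]

theorem abs_add_inf_le {a : α} (ha : 0 ≤ a) (x y : α) : |x + y| ⊓ a ≤ |x| ⊓ a + |y| ⊓ a := by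
  simp only [inf_comm _ a]
  exact (inf_le_inf_left a (abs_add_le x y)).trans
    (inf_add_le_inf_add_inf ha (abs_nonneg x) (abs_nonneg y))

end LatticeOrderedGroup

section VectorLattice

variable {E : Type*} [Lattice E] [AddCommGroup E] [Module ℝ E] [PosSMulMono ℝ E]

theorem abs_smul_le_smul_abs {c : ℝ} (hc : 0 ≤ c) (x : E) : |c • x| ≤ c • |x| :=
  abs_le'.2 ⟨smul_le_smul_of_nonneg_left (le_abs_self x) hc,
    by rw [← smul_neg]; exact smul_le_smul_of_nonneg_left (neg_le_abs x) hc⟩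

theorem smul_inf_of_pos {c : ℝ} (hc : 0 < c) (x y : E) : c • (x ⊓ y) = c • x ⊓ c • y :=
  (OrderIso.smulRight hc).map_inf x y

variable [AddLeftMono E]

theorem smul_inf_eq_zero {y v : E} {r : ℝ} (hr : 0 ≤ r) (hy : 0 ≤ y) (hv : 0 ≤ v)
    (h : y ⊓ v = 0) : r • y ⊓ v = 0 := by
  set s := max r 1
  have hs : 0 < s := one_pos.trans_le (le_max_right r 1)
  refine le_antisymm ?_ (le_inf (smul_nonneg hr hy) hv)
  calc r • y ⊓ v ≤ s • y ⊓ s • v :=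
        inf_le_inf (smul_le_smul_of_nonneg_right (le_max_left r 1) hy)
          (le_smul_of_one_le_left hv (le_max_right r 1))
    _ = s • (y ⊓ v) := (smul_inf_of_pos hs y v).symm
    _ = 0 := by rw [h, smul_zero]

theorem smul_posPart_sub_inf_le {x a : E} {M : ℝ} (hM : 0 ≤ M) (hx : 0 ≤ x) (ha : 0 ≤ a) :
    M • (x - a)⁺ ⊓ a ≤ x ⊓ a := by
  have hdecomp : a = x ⊓ a + (x - a)⁻ := by
    rw [negPart_def, neg_sub, ← sub_self a, ← sub_inf, add_sub_cancel]
  have hdisj : M • (x - a)⁺ ⊓ (x - a)⁻ = 0 :=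
    smul_inf_eq_zero hM (posPart_nonneg _) (negPart_nonneg _) (posPart_inf_negPart_eq_zero _)
  calc M • (x - a)⁺ ⊓ a = M • (x - a)⁺ ⊓ (x ⊓ a + (x - a)⁻) := by rw [← hdecomp]
    _ ≤ M • (x - a)⁺ ⊓ (x ⊓ a) + M • (x - a)⁺ ⊓ (x - a)⁻ :=
        inf_add_le_inf_add_inf (smul_nonneg hM (posPart_nonneg _)) (le_inf hx ha)
          (negPart_nonneg _)
    _ ≤ x ⊓ a := by rw [hdisj, add_zero]; exact inf_le_right

/-- The positive part of `2 • t - u` is disjoint from `u` but lies in the ideal generated by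
`u`, so it vanishes. -/
theorem two_smul_le_of_two_smul_inf_le {t u : E} {r : ℝ} (hr : 0 ≤ r) (hu : 0 ≤ u)
    (htr : t ≤ r • u) (h : (2 : ℝ) • (t ⊓ u) ≤ u) : (2 : ℝ) • t ≤ u := by
  let := AddCommGroup.toDistribLattice E
  have hdisj : ((2 : ℝ) • t - u)⁺ ⊓ u = 0 := by
    have hsub : ((2 : ℝ) • t - u) ⊓ u = (2 : ℝ) • (t ⊓ u) - u := by
      rw [smul_inf_of_pos two_pos, two_smul ℝ u, inf_sub, add_sub_cancel_right]
    rw [posPart_def, inf_sup_right, hsub, inf_eq_left.2 hu, sup_eq_right.2 (sub_nonpos.2 h)]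
  have hle : ((2 : ℝ) • t - u)⁺ ≤ (2 * r) • u := by
    rw [mul_smul]
    exact sup_le ((sub_le_self _ hu).trans (smul_le_smul_of_nonneg_left htr zero_le_two))
      (smul_nonneg zero_le_two (smul_nonneg hr hu))
  have hzero : ((2 : ℝ) • t - u)⁺ = 0 := by
    rw [← inf_eq_left.2 hle, inf_comm]
    exact smul_inf_eq_zero (by positivity) hu (posPart_nonneg _) (by rw [inf_comm, hdisj])
  exact sub_nonpos.1 (posPart_eq_zero.1 hzero)

end VectorLattice

section SolidSets

variable {E : Type*} [Lattice E] [AddCommGroup E] [AddLeftMono E] {S : Set E}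

theorem IsSolid.mem_of_nonneg_of_le (hS : IsSolid S) {x y : E} (hx : x ∈ S) (hy : 0 ≤ y)
    (hyx : y ≤ x) : y ∈ S :=
  hS hx (by rw [abs_of_nonneg hy]; exact hyx.trans (le_abs_self x))

theorem IsSolid.abs_mem_iff (hS : IsSolid S) {x : E} : |x| ∈ S ↔ x ∈ S :=
  ⟨fun h => hS h (abs_abs x).ge, fun h => hS h (abs_abs x).le⟩

def unbSet (a : E) (U : Set E) : Set E := (fun x => |x| ⊓ a) ⁻¹' U

theorem unbSet_subset_unbSet {a b : E} {U : Set E} (hU : IsSolid U) (ha : 0 ≤ a) (hab : a ≤ b) :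
    unbSet b U ⊆ unbSet a U := fun x hx =>
  hU.mem_of_nonneg_of_le hx (le_inf (abs_nonneg x) ha) (inf_le_inf_left _ hab)

theorem add_mem_unbSet {a : E} {U V : Set E} (ha : 0 ≤ a) (hU : IsSolid U)
    (hV : ∀ v ∈ V, ∀ w ∈ V, v + w ∈ U) {v w : E} (hv : v ∈ unbSet a V) (hw : w ∈ unbSet a V) :
    v + w ∈ unbSet a U :=
  hU.mem_of_nonneg_of_le (hV _ hv _ hw) (le_inf (abs_nonneg _) ha) (abs_add_inf_le ha v w)

end SolidSets

namespace IsLocallySolidTop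

variable {E : Type*} [Lattice E] [AddCommGroup E] [Module ℝ E] {τ : TopologicalSpace E}

theorem hasBasis_isSolid (hτ : IsLocallySolidTop τ) :
    (@nhds E τ 0).HasBasis (fun U => U ∈ @nhds E τ 0 ∧ IsSolid U) id :=
  ⟨fun U => ⟨fun hU => by obtain ⟨V, hV, hVs, hVU⟩ := hτ.2.2 U hU; exact ⟨V, ⟨hV, hVs⟩, hVU⟩,
    fun ⟨_, ⟨hV, _⟩, hVU⟩ => Filter.mem_of_superset hV hVU⟩⟩

variable [AddLeftMono E]

theorem hasBasis_unbNhdsZero (hτ : IsLocallySolidTop τ) :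
    (unbNhdsZero τ Set.univ).HasBasis
      (fun p : E × Set E => 0 ≤ p.1 ∧ p.2 ∈ @nhds E τ 0 ∧ IsSolid p.2)
      (fun p => unbSet p.1 p.2) := by
  have hanti : ∀ a b : E, 0 ≤ a → a ≤ b →
      Filter.comap (fun x => |x| ⊓ b) (@nhds E τ 0) ≤
        Filter.comap (fun x => |x| ⊓ a) (@nhds E τ 0) := fun a b ha hab =>
    (hτ.hasBasis_isSolid.comap _).ge_iff.2 fun U ⟨hU, hUs⟩ =>
      Filter.mem_of_superset (Filter.preimage_mem_comap hU) (unbSet_subset_unbSet hUs ha hab)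
  have hdir : DirectedOn ((fun a => Filter.comap (fun x => |x| ⊓ a) (@nhds E τ 0)) ⁻¹'o (· ≥ ·))
      {a ∈ Set.univ | 0 ≤ a} := by
    rintro a ⟨-, ha⟩ b ⟨-, hb⟩
    exact ⟨a ⊔ b, ⟨trivial, ha.trans le_sup_left⟩, hanti a _ ha le_sup_left,
      hanti b _ hb le_sup_right⟩
  have hne : ({a ∈ Set.univ | 0 ≤ a} : Set E).Nonempty := ⟨0, trivial, le_rfl⟩
  exact (Filter.hasBasis_biInf_of_directed hne _ _
    (fun a _ => hτ.hasBasis_isSolid.comap _) hdir).congr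
    (fun _ => and_congr_left' ⟨And.right, And.intro trivial⟩) fun _ _ => rfl

theorem nhds_le_unbNhdsZero (hτ : IsLocallySolidTop τ) :
    @nhds E τ 0 ≤ unbNhdsZero τ Set.univ :=
  hτ.hasBasis_unbNhdsZero.ge_iff.2 fun _ ⟨ha, hU, hUs⟩ =>
    Filter.mem_of_superset hU fun x hx =>
      hUs.mem_of_nonneg_of_le (hUs.abs_mem_iff.2 hx) (le_inf (abs_nonneg x) ha) inf_le_left

theorem nhds_unbTopology (hτ : IsLocallySolidTop τ) (x : E) :
    @nhds E (unbTopology τ Set.univ) x = Filter.map (x + ·) (unbNhdsZero τ Set.univ) := by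
  let := τ
  have := hτ.1
  refine TopologicalSpace.nhds_mkOfNhds_of_hasBasis (fun y => hτ.hasBasis_unbNhdsZero.map _)
    (fun y p ⟨ha, hU, _⟩ => ⟨0, ?_, add_zero y⟩) (fun y p ⟨ha, hU, hUs⟩ => ?_) x
  · show |0| ⊓ p.1 ∈ p.2
    rw [abs_zero, inf_eq_left.2 ha]
    exact mem_of_mem_nhds hU
  · obtain ⟨V, hV, hVU⟩ := exists_nhds_zero_half hU
    obtain ⟨W, ⟨hW, hWs⟩, hWV⟩ := hτ.hasBasis_isSolid.mem_iff.1 hV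
    have hWmem := hτ.hasBasis_unbNhdsZero.mem_of_mem (i := (p.1, W)) ⟨ha, hW, hWs⟩
    filter_upwards [Filter.image_mem_map hWmem]
    rintro _ ⟨v, hv, rfl⟩
    refine Filter.mem_map.2 (Filter.mem_of_superset hWmem fun w hw => ?_)
    exact ⟨v + w, add_mem_unbSet ha hUs (fun v hv w hw => hVU v (hWV hv) w (hWV hw)) hv hw,
      (add_assoc _ _ _).symm⟩

theorem nhds_zero_unbTopology (hτ : IsLocallySolidTop τ) :
    @nhds E (unbTopology τ Set.univ) 0 = unbNhdsZero τ Set.univ := by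
  simp only [hτ.nhds_unbTopology, zero_add, Filter.map_id']

end IsLocallySolidTop

theorem exists_pos_smul_mem {F : Type*} [AddCommGroup F] [Module ℝ F] [TopologicalSpace F]
    [ContinuousSMul ℝ F] {U : Set F} (hU : U ∈ 𝓝 (0 : F)) (x : F) : ∃ l : ℝ, 0 < l ∧ l • x ∈ U :=
  have hx : Tendsto (fun l : ℝ => l • x) (𝓝[>] 0) (𝓝 0) :=
    ((continuous_id.smul continuous_const).tendsto' 0 0 (zero_smul ℝ x)).mono_left
      nhdsWithin_le_nhds
  ((hx.eventually hU).and self_mem_nhdsWithin).exists.imp fun _ h => ⟨h.2, h.1⟩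

def HasOrderBoundedNhdsZero {E : Type*} [Lattice E] [AddCommGroup E] (τ : TopologicalSpace E) :
    Prop :=
  ∃ V ∈ @nhds E τ 0, ∃ u : E, 0 ≤ u ∧ V ⊆ Set.Icc (-u) u

section UnboundedTopology

variable {E : Type*} [Lattice E] [AddCommGroup E] [Module ℝ E] {τ : TopologicalSpace E}

theorem exists_abs_le_smul_of_nhds_subset_Icc [PosSMulMono ℝ E] (hτ : IsLocallySolidTop τ)
    {V : Set E} {u : E} (hV : V ∈ @nhds E τ 0) (hVu : V ⊆ Set.Icc (-u) u) (x : E) :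
    ∃ r : ℝ, 0 ≤ r ∧ |x| ≤ r • u := by
  let := τ
  have := hτ.2.1
  obtain ⟨l, hl, hlx⟩ := exists_pos_smul_mem hV |x|
  exact ⟨l⁻¹, inv_nonneg.2 hl.le, (le_inv_smul_iff_of_pos hl).2 (hVu hlx).2⟩

variable [AddLeftMono E]

theorem HasOrderBoundedNhdsZero.of_unbTopology (hτ : IsLocallySolidTop τ)
    (h : HasOrderBoundedNhdsZero (unbTopology τ Set.univ)) : HasOrderBoundedNhdsZero τ := by
  obtain ⟨V, hV, hVu⟩ := h
  rw [hτ.nhds_zero_unbTopology] at hV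
  exact ⟨V, hτ.nhds_le_unbNhdsZero hV, hVu⟩

theorem eq_zero_of_forall_smul_mem (hτ : IsLocallySolidTop τ) (hT2 : @T2Space E τ) {S : Set E}
    (hS : TopBounded (unbTopology τ Set.univ) S) {q : E} (hq : ∀ M : ℝ, 0 < M → M • q ∈ S) :
    q = 0 := by
  let := τ
  by_contra hne
  obtain ⟨U, ⟨hU, hUs⟩, hUq⟩ :=
    hτ.hasBasis_isSolid.mem_iff.1 (compl_singleton_mem_nhds (Ne.symm hne))
  have hqU : unbSet |q| U ∈ @nhds E (unbTopology τ Set.univ) 0 := by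
    rw [hτ.nhds_zero_unbTopology]
    exact hτ.hasBasis_unbNhdsZero.mem_of_mem (i := (|q|, U)) ⟨abs_nonneg q, hU, hUs⟩
  obtain ⟨l, hl, hlS⟩ := hS _ hqU
  have hmem : |q| ⊓ |q| ∈ U := by
    simpa only [unbSet, Set.mem_preimage, smul_smul, mul_inv_cancel₀ hl.ne', one_smul]
      using hlS _ (hq l⁻¹ (inv_pos.2 hl))
  rw [inf_idem] at hmem
  exact hUq (hUs.abs_mem_iff.1 hmem) rfl

variable [PosSMulMono ℝ E]

theorem LocallyBoundedTop.hasOrderBoundedNhdsZero_unbTopology (hτ : IsLocallySolidTop τ)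
    (hT2 : @T2Space E τ) (h : LocallyBoundedTop (unbTopology τ Set.univ)) :
    HasOrderBoundedNhdsZero (unbTopology τ Set.univ) := by
  obtain ⟨V, hV, hVb⟩ := h
  rw [hτ.nhds_zero_unbTopology] at hV
  obtain ⟨⟨a, U⟩, ⟨ha, hU, hUs⟩, haUV⟩ := hτ.hasBasis_unbNhdsZero.mem_iff.1 hV
  refine ⟨unbSet a U, ?_, a, ha, fun x hx => ?_⟩
  · rw [hτ.nhds_zero_unbTopology]
    exact hτ.hasBasis_unbNhdsZero.mem_of_mem (i := (a, U)) ⟨ha, hU, hUs⟩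
  have hray : ∀ M : ℝ, 0 < M → M • (|x| - a)⁺ ∈ V := fun M hM => by
    have hMq : 0 ≤ M • (|x| - a)⁺ := smul_nonneg hM.le (posPart_nonneg _)
    refine haUV (hUs.mem_of_nonneg_of_le hx (le_inf (abs_nonneg _) ha) ?_)
    show |M • (|x| - a)⁺| ⊓ a ≤ |x| ⊓ a
    rw [abs_of_nonneg hMq]
    exact smul_posPart_sub_inf_le hM.le (abs_nonneg x) ha
  have hq := eq_zero_of_forall_smul_mem hτ hT2 hVb hray
  exact abs_le_iff_mem_Icc.1 (sub_nonpos.1 (posPart_eq_zero.1 hq))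

theorem HasOrderBoundedNhdsZero.unbNhdsZero_eq (h : HasOrderBoundedNhdsZero τ)
    (hτ : IsLocallySolidTop τ) : unbNhdsZero τ Set.univ = @nhds E τ 0 := by
  let := τ
  have := hτ.2.1
  obtain ⟨V, hV, u, hu, hVu⟩ := h
  refine le_antisymm (fun U hU => ?_) hτ.nhds_le_unbNhdsZero
  have hV2 : (fun y : E => (2 : ℝ) • y) ⁻¹' V ∈ 𝓝 (0 : E) :=
    (continuous_const_smul (2 : ℝ)).tendsto' 0 0 (smul_zero _) hV
  obtain ⟨W, ⟨hW, hWs⟩, hWU⟩ := hτ.hasBasis_isSolid.mem_iff.1 (inter_mem hU hV2)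
  refine mem_of_superset (hτ.hasBasis_unbNhdsZero.mem_of_mem (i := (u, W)) ⟨hu, hW, hWs⟩)
    fun x hx => ?_
  obtain ⟨r, hr, hxr⟩ := exists_abs_le_smul_of_nhds_subset_Icc hτ hV hVu x
  have hxu : |x| ≤ u := (le_smul_of_one_le_left (abs_nonneg x) one_le_two).trans
    (two_smul_le_of_two_smul_inf_le hr hu hxr (hVu (hWU hx).2).2)
  have hxW : |x| ∈ W := inf_eq_left.2 hxu ▸ hx
  exact (hWU (hWs.abs_mem_iff.1 hxW)).1

theorem HasOrderBoundedNhdsZero.unbTopology_eq (h : HasOrderBoundedNhdsZero τ)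
    (hτ : IsLocallySolidTop τ) : unbTopology τ Set.univ = τ := by
  let := τ
  have := hτ.1
  refine TopologicalSpace.ext_nhds fun x => ?_
  rw [hτ.nhds_unbTopology, h.unbNhdsZero_eq hτ, map_add_left_nhds_zero]

theorem HasOrderBoundedNhdsZero.locallyBoundedTop (h : HasOrderBoundedNhdsZero τ)
    (hτ : IsLocallySolidTop τ) : LocallyBoundedTop τ := by
  let := τ
  have := hτ.2.1
  obtain ⟨V, hV, u, hu, hVu⟩ := h
  refine ⟨V, hV, fun U hU => ?_⟩
  obtain ⟨W, ⟨hW, hWs⟩, hWU⟩ := hτ.hasBasis_isSolid.mem_iff.1 hU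
  obtain ⟨l, hl, hlu⟩ := exists_pos_smul_mem hW u
  refine ⟨l, hl, fun x hx => hWU (hWs hlu ?_)⟩
  calc |l • x| ≤ l • |x| := abs_smul_le_smul_abs hl.le x
    _ ≤ l • u := smul_le_smul_of_nonneg_left (abs_le_iff_mem_Icc.2 (hVu hx)) hl.le
    _ = |l • u| := (abs_of_nonneg (smul_nonneg hl.le hu)).symm

end UnboundedTopology

theorem stmt13_general (τ : TopologicalSpace X)
    (hτ : IsLocallySolidTop τ) (hT2 : @T2Space X τ) :
    ((LocallyBoundedTop (unbTopology τ Set.univ) ↔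
        ∃ V ∈ @nhds X (unbTopology τ Set.univ) 0, ∃ u : X, 0 ≤ u ∧ V ⊆ Set.Icc (-u) u) ∧
      ((∃ V ∈ @nhds X (unbTopology τ Set.univ) 0, ∃ u : X, 0 ≤ u ∧ V ⊆ Set.Icc (-u) u) ↔
        ∃ V ∈ @nhds X τ 0, ∃ u : X, 0 ≤ u ∧ V ⊆ Set.Icc (-u) u)) ∧
    (LocallyBoundedTop (unbTopology τ Set.univ) → τ = unbTopology τ Set.univ) := by
  have h₁₂ := LocallyBoundedTop.hasOrderBoundedNhdsZero_unbTopology hτ hT2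
  have h₂₃ := HasOrderBoundedNhdsZero.of_unbTopology hτ
  refine ⟨⟨⟨h₁₂, fun h => ?_⟩, ⟨h₂₃, fun h => ?_⟩⟩,
    fun h => ((h₂₃ (h₁₂ h)).unbTopology_eq hτ).symm⟩
  · rw [(h₂₃ h).unbTopology_eq hτ]
    exact (h₂₃ h).locallyBoundedTop hτ
  · rw [HasOrderBoundedNhdsZero.unbTopology_eq h hτ]
    exact h

/-- TFAE: (i) `u τ` is locally bounded; (ii) `u τ` has an order bounded
neighbourhood of zero; (iii) `τ` has an order bounded neighbourhood of zero; moreover,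
in this case `τ = u τ`. -/
theorem stmt13 (hArch : VLArchimedean X) (τ : TopologicalSpace X)
    (hτ : IsLocallySolidTop τ) (hT2 : @T2Space X τ) :
    ((LocallyBoundedTop (unbTopology τ Set.univ) ↔
        ∃ V ∈ @nhds X (unbTopology τ Set.univ) 0, ∃ u : X, 0 ≤ u ∧ V ⊆ Set.Icc (-u) u) ∧
      ((∃ V ∈ @nhds X (unbTopology τ Set.univ) 0, ∃ u : X, 0 ≤ u ∧ V ⊆ Set.Icc (-u) u) ↔
        ∃ V ∈ @nhds X τ 0, ∃ u : X, 0 ≤ u ∧ V ⊆ Set.Icc (-u) u)) ∧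
    (LocallyBoundedTop (unbTopology τ Set.univ) → τ = unbTopology τ Set.univ) :=
  stmt13_general τ hτ hT2
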